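/- For every L ∈ ℤ₊ and every continuous map a : [1, 1+2^L] → ℂ, the 2-variation of a over [1, 1+2^L] satisfies V²(a_s : s ∈ [1, 1+2^L]) ≤ √2 · Σ_{l ∈ ℤ₊} ( Σ_{j=1}^{2^l} |a_{1+j·2^{L-l}} − a_{1+(j−1)·2^{L-l}}|² )^{1/2}. -/

import Mathlib

/-!
Between two points `s ≤ t` of the grid of mesh `2 ^ L / 2 ^ M` in `[1, 1 + 2 ^ L]`, the increment
of `a` is the sum of its increments over the maximal dyadic subintervals of `[s, t]` of at most
half the total length, and at most two of them have any given length. Minkowski's inequality over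
the lengths and `(x + y)² ≤ 2 (x² + y²)` within one length bound the ℓ² sum along a chain of grid
points by `√2` times the sum over lengths of the ℓ² norms of all dyadic increments of that length,
since the dyadic intervals used by different links of the chain are disjoint. An arbitrary chain
is the limit of its projections to finer and finer grids, and `a` is continuous.
-/

open Set ENNReal

/-- One-parameter 2-variation seminorm of `a` over the set `I ⊆ ℝ`:
the supremum over finite increasing chains in `I` of the ℓ² sum of consecutive differences. -/
noncomputable def var2 (a : ℝ → ℂ) (I : Set ℝ) : ℝ≥0∞ :=
  ⨆ (J : ℕ) (u : Fin (J + 1) → ℝ) (_ : StrictMono u) (_ : ∀ j, u j ∈ I),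
    (∑ j : Fin J, ((‖a (u j.succ) - a (u j.castSucc)‖₊ : ℝ≥0∞)) ^ 2) ^ (1 / 2 : ℝ)

open Finset Filter Topology

section DyadicDecomposition

variable {E : Type*} [AddCommGroup E] (f : ℕ → E)

def dyadicIncr (e k : ℕ) : E :=
  f ((k + 1) * 2 ^ e) - f (k * 2 ^ e)

/-- `ceilHalves s e = ⌈s / 2 ^ e⌉`. -/
def ceilHalves (s : ℕ) : ℕ → ℕ
  | 0 => s
  | e + 1 => (ceilHalves s e + 1) / 2

lemma div_two_pow_le_ceilHalves (s : ℕ) : ∀ e, s / 2 ^ e ≤ ceilHalves s e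
  | 0 => by simp [ceilHalves]
  | e + 1 => by
    rw [pow_succ, ← Nat.div_div_eq_div_mul, ceilHalves]
    have := div_two_pow_le_ceilHalves s e
    omega

/-- Indices `k` of the dyadic intervals `[k 2^e, (k + 1) 2^e]` contained in `[s, t]`. -/
def dyadicIdx (s t e : ℕ) : Finset ℕ :=
  Ico (ceilHalves s e) (t / 2 ^ e)

lemma sum_Ico_dyadicIncr (e : ℕ) {a b : ℕ} (hab : a ≤ b) :
    ∑ k ∈ Ico a b, dyadicIncr f e k = f (b * 2 ^ e) - f (a * 2 ^ e) :=
  sum_Ico_sub (fun k => f (k * 2 ^ e)) hab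

lemma sum_Ico_two_mul_dyadicIncr (e a b : ℕ) :
    ∑ k ∈ Ico (2 * a) (2 * b), dyadicIncr f e k = ∑ k ∈ Ico a b, dyadicIncr f (e + 1) k := by
  rcases le_total a b with hab | hba
  · rw [sum_Ico_dyadicIncr f e (by omega), sum_Ico_dyadicIncr f (e + 1) hab, pow_succ',
      mul_comm 2 b, mul_comm 2 a, mul_assoc, mul_assoc]
  · simp [Finset.Ico_eq_empty_of_le, hba]

lemma sum_dyadicIdx_zero {s t : ℕ} (hst : s ≤ t) :
    ∑ k ∈ dyadicIdx s t 0, dyadicIncr f 0 k = f t - f s := by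
  simpa [dyadicIdx, ceilHalves] using sum_Ico_dyadicIncr f 0 hst

/-- Indices of the halves of the dyadic intervals of length `2 ^ (e + 1)` contained in `[s, t]`. -/
def dyadicChildIdx (s t e : ℕ) : Finset ℕ :=
  Ico (2 * ceilHalves s (e + 1)) (2 * (t / 2 ^ (e + 1)))

lemma dyadicChildIdx_subset (s t e : ℕ) : dyadicChildIdx s t e ⊆ dyadicIdx s t e := by
  apply Finset.Ico_subset_Ico
  · rw [ceilHalves]; omega
  · rw [pow_succ, ← Nat.div_div_eq_div_mul]; omega

lemma sum_dyadicIdx_succ (s t e : ℕ) :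
    ∑ k ∈ dyadicIdx s t e, dyadicIncr f e k =
      ∑ k ∈ dyadicIdx s t e \ dyadicChildIdx s t e, dyadicIncr f e k +
        ∑ k ∈ dyadicIdx s t (e + 1), dyadicIncr f (e + 1) k := by
  rw [← sum_sdiff (dyadicChildIdx_subset s t e), dyadicChildIdx, sum_Ico_two_mul_dyadicIncr]
  rfl

lemma card_dyadicIdx_sdiff_le (s t e : ℕ) :
    #(dyadicIdx s t e \ dyadicChildIdx s t e) ≤ 2 := by
  have hs : ceilHalves s e + 1 ≥ 2 * ceilHalves s (e + 1) := by rw [ceilHalves]; omega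
  have ht : t / 2 ^ e ≤ 2 * (t / 2 ^ (e + 1)) + 1 := by
    rw [pow_succ, ← Nat.div_div_eq_div_mul]; omega
  refine (card_le_card fun k hk => ?_).trans (card_le_two (a := 2 * ceilHalves s (e + 1) - 1)
    (b := 2 * (t / 2 ^ (e + 1))))
  simp only [dyadicIdx, dyadicChildIdx, Finset.mem_sdiff, Finset.mem_Ico] at hk
  simp only [Finset.mem_insert, Finset.mem_singleton]
  omega

lemma card_dyadicIdx_le {s t N : ℕ} (ht : t ≤ 2 ^ (N + 1)) : #(dyadicIdx s t N) ≤ 2 := by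
  have : t / 2 ^ N ≤ 2 := Nat.div_le_of_le_mul (by rwa [← pow_succ])
  simp only [dyadicIdx, Nat.card_Ico]
  omega

/-- The intervals of length `2 ^ e` in the decomposition of `[s, t]` into maximal dyadic intervals
of length at most `2 ^ N`. -/
def dyadicPieces (N s t e : ℕ) : Finset ℕ :=
  if e < N then dyadicIdx s t e \ dyadicChildIdx s t e else dyadicIdx s t e

lemma dyadicPieces_subset (N s t e : ℕ) : dyadicPieces N s t e ⊆ dyadicIdx s t e := by
  unfold dyadicPieces
  split_ifs
  exacts [sdiff_subset, Finset.Subset.rfl]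

lemma card_dyadicPieces_le {N s t e : ℕ} (ht : t ≤ 2 ^ (N + 1)) (he : e ≤ N) :
    #(dyadicPieces N s t e) ≤ 2 := by
  unfold dyadicPieces
  split_ifs with h
  · exact card_dyadicIdx_sdiff_le s t e
  · obtain rfl : e = N := by omega
    exact card_dyadicIdx_le ht

lemma sum_dyadicPieces (N : ℕ) {s t : ℕ} (hst : s ≤ t) :
    ∑ e ∈ range (N + 1), ∑ k ∈ dyadicPieces N s t e, dyadicIncr f e k = f t - f s := by
  have telescope : ∀ n ≤ N, ∑ e ∈ range n, ∑ k ∈ dyadicPieces N s t e, dyadicIncr f e k +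
      ∑ k ∈ dyadicIdx s t n, dyadicIncr f n k = f t - f s := by
    intro n hn
    induction n with
    | zero => simpa using sum_dyadicIdx_zero f hst
    | succ n ih =>
      rw [← ih (by omega), sum_range_succ, sum_dyadicIdx_succ f s t n, dyadicPieces,
        if_pos (by omega), add_assoc]
  rw [sum_range_succ, dyadicPieces, if_neg (lt_irrefl N)]
  exact telescope N le_rfl

end DyadicDecomposition

lemma ENNReal.Lp_finsetSum_le {ι κ : Type*} (s : Finset ι) (t : Finset κ) (F : ι → κ → ℝ≥0∞)
    {p : ℝ} (hp : 1 ≤ p) :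
    (∑ j ∈ t, (∑ i ∈ s, F i j) ^ p) ^ (1 / p) ≤ ∑ i ∈ s, (∑ j ∈ t, F i j ^ p) ^ (1 / p) := by
  induction s using Finset.cons_induction with
  | empty =>
    have hp0 : 0 < p := zero_lt_one.trans_le hp
    simp [ENNReal.zero_rpow_of_pos hp0, hp0]
  | cons i s hi ih =>
    simp only [sum_cons]
    exact (ENNReal.Lp_add_le _ _ _ hp).trans (add_le_add_right ih _)

lemma sq_nnnorm_sum_le_card_mul {ι E : Type*} [SeminormedAddCommGroup E] (S : Finset ι)
    (z : ι → E) :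
    (‖∑ k ∈ S, z k‖₊ : ℝ≥0∞) ^ 2 ≤ #S * ∑ k ∈ S, (‖z k‖₊ : ℝ≥0∞) ^ 2 := by
  have h : ‖∑ k ∈ S, z k‖₊ ^ 2 ≤ #S * ∑ k ∈ S, ‖z k‖₊ ^ 2 :=
    (pow_le_pow_left₀ (by positivity) (nnnorm_sum_le _ _) 2).trans sq_sum_le_card_mul_sum_sq
  exact_mod_cast h

lemma sum_range_sum_Ico_of_monotone {M : Type*} [AddCommMonoid M] (g : ℕ → M) {b : ℕ → ℕ}
    (hb : Monotone b) (J : ℕ) :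
    ∑ j ∈ range J, ∑ k ∈ Ico (b j) (b (j + 1)), g k = ∑ k ∈ Ico (b 0) (b J), g k := by
  induction J with
  | zero => simp
  | succ J ih =>
    rw [sum_range_succ, ih, sum_Ico_consecutive _ (hb (Nat.zero_le J)) (hb J.le_succ)]

lemma ENNReal.ofReal_sqrt_two : ENNReal.ofReal √2 = 2 ^ (1 / 2 : ℝ) := by
  rw [Real.sqrt_eq_rpow, ← ENNReal.ofReal_rpow_of_nonneg zero_le_two (by norm_num), ofReal_ofNat]

section DyadicChains

variable {E : Type*} [SeminormedAddCommGroup E] (f : ℕ → E)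

lemma sq_nnnorm_sum_dyadicPieces_le {N s t e : ℕ} (ht : t ≤ 2 ^ (N + 1)) (he : e ≤ N) :
    (‖∑ k ∈ dyadicPieces N s t e, dyadicIncr f e k‖₊ : ℝ≥0∞) ^ 2 ≤
      2 * ∑ k ∈ Ico (s / 2 ^ e) (t / 2 ^ e), (‖dyadicIncr f e k‖₊ : ℝ≥0∞) ^ 2 := by
  refine (sq_nnnorm_sum_le_card_mul _ _).trans
    (mul_le_mul' (by exact_mod_cast card_dyadicPieces_le ht he) ?_)
  refine sum_le_sum_of_subset ((dyadicPieces_subset _ _ _ _).trans ?_)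
  exact Finset.Ico_subset_Ico_left (div_two_pow_le_ceilHalves _ _)

theorem chain_l2_le_sqrt_two_mul_sum_dyadic_l2 (N J : ℕ) {n : ℕ → ℕ} (hn : Monotone n)
    (hJ : n J ≤ 2 ^ (N + 1)) :
    (∑ j ∈ range J, (‖f (n (j + 1)) - f (n j)‖₊ : ℝ≥0∞) ^ 2) ^ (1 / 2 : ℝ) ≤
      ENNReal.ofReal √2 * ∑ e ∈ range (N + 1),
        (∑ k ∈ range (2 ^ (N + 1 - e)), (‖dyadicIncr f e k‖₊ : ℝ≥0∞) ^ 2) ^ (1 / 2 : ℝ) := by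
  set g : ℕ → ℕ → ℝ≥0∞ := fun e k => (‖dyadicIncr f e k‖₊ : ℝ≥0∞) ^ 2
  set F : ℕ → ℕ → ℝ≥0∞ := fun e j =>
    ‖∑ k ∈ dyadicPieces N (n j) (n (j + 1)) e, dyadicIncr f e k‖₊
  have split (j : ℕ) : (‖f (n (j + 1)) - f (n j)‖₊ : ℝ≥0∞) ≤ ∑ e ∈ range (N + 1), F e j := by
    rw [← sum_dyadicPieces f N (hn j.le_succ)]
    exact (ENNReal.coe_le_coe.2 (nnnorm_sum_le _ _)).trans_eq (by push_cast; rfl)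
  have level (e : ℕ) (he : e ∈ range (N + 1)) :
      ∑ j ∈ range J, F e j ^ (2 : ℝ) ≤ 2 * ∑ k ∈ range (2 ^ (N + 1 - e)), g e k := by
    have he : e ≤ N := Nat.lt_succ_iff.1 (mem_range.1 he)
    calc ∑ j ∈ range J, F e j ^ (2 : ℝ)
        ≤ ∑ j ∈ range J, 2 * ∑ k ∈ Ico (n j / 2 ^ e) (n (j + 1) / 2 ^ e), g e k :=
          sum_le_sum fun j hj => (rpow_two _).trans_le <|
            sq_nnnorm_sum_dyadicPieces_le f ((hn (mem_range.1 hj)).trans hJ) he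
      _ = 2 * ∑ k ∈ Ico (n 0 / 2 ^ e) (n J / 2 ^ e), g e k := by
          rw [← mul_sum, sum_range_sum_Ico_of_monotone (g e)
            (fun i i' h => Nat.div_le_div_right (hn h))]
      _ ≤ 2 * ∑ k ∈ range (2 ^ (N + 1 - e)), g e k := by
          gcongr
          refine fun k hk => mem_range.2 ((Finset.mem_Ico.1 hk).2.trans_le ?_)
          rw [← Nat.pow_div (by omega) two_pos]
          exact Nat.div_le_div_right hJ
  calc (∑ j ∈ range J, (‖f (n (j + 1)) - f (n j)‖₊ : ℝ≥0∞) ^ 2) ^ (1 / 2 : ℝ)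
      ≤ (∑ j ∈ range J, (∑ e ∈ range (N + 1), F e j) ^ (2 : ℝ)) ^ (1 / 2 : ℝ) := by
        gcongr with j
        rw [rpow_two]
        exact pow_le_pow_left' (split j) 2
    _ ≤ ∑ e ∈ range (N + 1), (∑ j ∈ range J, F e j ^ (2 : ℝ)) ^ (1 / 2 : ℝ) :=
        ENNReal.Lp_finsetSum_le _ _ _ one_le_two
    _ ≤ ∑ e ∈ range (N + 1), (2 * ∑ k ∈ range (2 ^ (N + 1 - e)), g e k) ^ (1 / 2 : ℝ) := by
        gcongr with e he
        exact level e he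
    _ = _ := by
        rw [ofReal_sqrt_two, mul_sum]
        exact sum_congr rfl fun e _ => ENNReal.mul_rpow_of_nonneg _ _ (by norm_num)

end DyadicChains

lemma var2_le_of_monotone_chains {a : ℝ → ℂ} {I : Set ℝ} {C : ℝ≥0∞}
    (h : ∀ (J : ℕ) (v : ℕ → ℝ), Monotone v → (∀ j, v j ∈ I) →
      (∑ j ∈ range J, (‖a (v (j + 1)) - a (v j)‖₊ : ℝ≥0∞) ^ 2) ^ (1 / 2 : ℝ) ≤ C) :
    var2 a I ≤ C := by
  refine iSup_le fun J => iSup_le fun u => iSup_le fun hu => iSup_le fun huI => ?_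
  let v : ℕ → ℝ := fun i => u ⟨min i J, by omega⟩
  have hv : Monotone v := fun i i' hii' => hu.monotone (Fin.mk_le_mk.2 (min_le_min_right J hii'))
  refine le_of_eq_of_le ?_ (h J v hv fun i => huI _)
  rw [← Fin.sum_univ_eq_sum_range (fun j => (‖a (v (j + 1)) - a (v j)‖₊ : ℝ≥0∞) ^ 2)]
  congr! with j
  · simp [Fin.succ]
  · simp [Fin.castSucc]

noncomputable def gridFloor (c h x : ℝ) : ℝ :=
  c + ⌊(x - c) / h⌋₊ * h

lemma gridFloor_le {c h x : ℝ} (hh : 0 < h) (hx : c ≤ x) : gridFloor c h x ≤ x := by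
  have := Nat.floor_le (div_nonneg (sub_nonneg.2 hx) hh.le)
  rw [le_div_iff₀ hh] at this
  rw [gridFloor]
  linarith

lemma sub_lt_gridFloor {c h x : ℝ} (hh : 0 < h) : x - h < gridFloor c h x := by
  have := Nat.lt_floor_add_one ((x - c) / h)
  rw [div_lt_iff₀ hh] at this
  rw [gridFloor]
  linarith

lemma gridFloor_mem_Icc {c h x D : ℝ} (hh : 0 < h) (hx : x ∈ Icc c (c + D)) :
    gridFloor c h x ∈ Icc c (c + D) :=
  ⟨le_add_of_nonneg_right (by positivity), (gridFloor_le hh hx.1).trans hx.2⟩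

lemma tendsto_gridFloor {c x : ℝ} (hx : c ≤ x) {h : ℕ → ℝ} (hh : ∀ N, 0 < h N)
    (h0 : Tendsto h atTop (𝓝 0)) : Tendsto (fun N => gridFloor c (h N) x) atTop (𝓝 x) := by
  have hlow : Tendsto (fun N => x - h N) atTop (𝓝 x) := by simpa using h0.const_sub x
  exact tendsto_of_tendsto_of_tendsto_of_le_of_le hlow tendsto_const_nhds
    (fun N => (sub_lt_gridFloor (hh N)).le) (fun N => gridFloor_le (hh N) hx)

lemma floor_div_le_two_pow {c x D : ℝ} (hD : 0 < D) (hx : x ∈ Icc c (c + D)) (M : ℕ) :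
    ⌊(x - c) / (D / 2 ^ M)⌋₊ ≤ 2 ^ M := by
  refine Nat.floor_le_of_le ?_
  rw [div_le_iff₀ (by positivity), Nat.cast_pow, Nat.cast_ofNat, mul_div_cancel₀ _ (by positivity)]
  linarith [hx.2]

lemma tendsto_chain_l2 {X E : Type*} [TopologicalSpace X] [SeminormedAddCommGroup E] {a : X → E}
    {I : Set X} (ha : ContinuousOn a I) {v : ℕ → X} (hv : ∀ j, v j ∈ I) {w : ℕ → ℕ → X}
    (hw : ∀ N j, w N j ∈ I)
    (hwv : ∀ j, Tendsto (fun N => w N j) atTop (𝓝 (v j))) (J : ℕ) :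
    Tendsto (fun N => (∑ j ∈ range J, (‖a (w N (j + 1)) - a (w N j)‖₊ : ℝ≥0∞) ^ 2) ^ (1 / 2 : ℝ))
      atTop (𝓝 ((∑ j ∈ range J, (‖a (v (j + 1)) - a (v j)‖₊ : ℝ≥0∞) ^ 2) ^ (1 / 2 : ℝ))) := by
  have hcont : Continuous fun z : ℕ → E =>
      (∑ j ∈ range J, (‖z (j + 1) - z j‖₊ : ℝ≥0∞) ^ 2) ^ (1 / 2 : ℝ) := by
    fun_prop
  have hlim : Tendsto (fun N j => a (w N j)) atTop (𝓝 (fun j => a (v j))) :=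
    tendsto_pi_nhds.2 fun j => (ha _ (hv j)).tendsto.comp
      (tendsto_nhdsWithin_iff.2 ⟨hwv j, Eventually.of_forall fun N => hw N j⟩)
  simpa only [Function.comp_def] using (hcont.tendsto (fun j => a (v j))).comp hlim

noncomputable def dyadicLevelVar (a : ℝ → ℂ) (L l : ℕ) : ℝ≥0∞ :=
  (∑ j ∈ Finset.Icc (1 : ℕ) (2 ^ l),
    (‖a (1 + (j : ℝ) * 2 ^ ((L : ℝ) - l)) - a (1 + ((j : ℝ) - 1) * 2 ^ ((L : ℝ) - l))‖₊ : ℝ≥0∞)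
      ^ 2) ^ (1 / 2 : ℝ)

lemma two_pow_mul_div_two_pow {L M e : ℕ} (he : e ≤ M) :
    (2 : ℝ) ^ e * (2 ^ L / 2 ^ M) = 2 ^ ((L : ℝ) - (M - e : ℕ)) := by
  rw [Real.rpow_sub two_pos, Real.rpow_natCast, Real.rpow_natCast, ← Nat.sub_add_cancel he,
    pow_add, Nat.add_sub_cancel]
  field_simp

lemma dyadicIncr_l2_eq_dyadicLevelVar (a : ℝ → ℂ) {L M e : ℕ} (he : e ≤ M) :
    (∑ k ∈ range (2 ^ (M - e)),
      (‖dyadicIncr (fun m => a (1 + m * (2 ^ L / 2 ^ M))) e k‖₊ : ℝ≥0∞) ^ 2) ^ (1 / 2 : ℝ) =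
      dyadicLevelVar a L (M - e) := by
  have hpt (m : ℕ) : ((m * 2 ^ e : ℕ) : ℝ) * (2 ^ L / 2 ^ M) = m * 2 ^ ((L : ℝ) - (M - e : ℕ)) := by
    rw [← two_pow_mul_div_two_pow he]; push_cast; ring
  rw [dyadicLevelVar, ← Finset.Ico_add_one_right_eq_Icc, sum_Ico_eq_sum_range, Nat.add_sub_cancel]
  congr 1
  refine sum_congr rfl fun k _ => ?_
  simp only [dyadicIncr, hpt]
  push_cast
  ring_nf

lemma sum_dyadicLevelVar_le_tsum (a : ℝ → ℂ) (L M : ℕ) :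
    ∑ e ∈ range M, dyadicLevelVar a L (M - e) ≤ ∑' l : ℕ+, dyadicLevelVar a L l := by
  rw [tsum_pnat_eq_tsum_succ (f := dyadicLevelVar a L)]
  refine le_of_eq_of_le ((sum_congr rfl fun e he => ?_).trans
    (sum_range_reflect (fun i => dyadicLevelVar a L (i + 1)) M)) (ENNReal.sum_le_tsum _)
  have := mem_range.1 he
  congr 1
  omega

theorem stmt0 (L : ℕ) (a : ℝ → ℂ)
    (ha : ContinuousOn a (Set.Icc 1 (1 + 2 ^ L))) :
    var2 a (Set.Icc 1 (1 + 2 ^ L)) ≤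
      ENNReal.ofReal (Real.sqrt 2) *
        ∑' l : ℕ+,
          (∑ j ∈ Finset.Icc (1 : ℕ) (2 ^ (l : ℕ)),
              ((‖a (1 + (j : ℝ) * (2 : ℝ) ^ ((L : ℝ) - ((l : ℕ) : ℝ)))
                  - a (1 + ((j : ℝ) - 1) * (2 : ℝ) ^ ((L : ℝ) - ((l : ℕ) : ℝ)))‖₊ : ℝ≥0∞)) ^ 2)
            ^ (1 / 2 : ℝ) := by
  refine var2_le_of_monotone_chains fun J v hv hvI => ?_
  set h : ℕ → ℝ := fun N => 2 ^ L / 2 ^ (N + 1)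
  have hh (N : ℕ) : 0 < h N := by positivity
  have h0 : Tendsto h atTop (𝓝 0) :=
    tendsto_const_nhds.div_atTop ((tendsto_pow_atTop_atTop_of_one_lt (one_lt_two (α := ℝ))).comp
      (tendsto_add_atTop_nat 1))
  refine le_of_tendsto' (tendsto_chain_l2 ha hvI (fun N j => gridFloor_mem_Icc (hh N) (hvI j))
    (fun j => tendsto_gridFloor (hvI j).1 hh h0) J) fun N => ?_
  calc _ ≤ ENNReal.ofReal √2 * ∑ e ∈ range (N + 1), (∑ k ∈ range (2 ^ (N + 1 - e)),
          (‖dyadicIncr (fun m => a (1 + m * h N)) e k‖₊ : ℝ≥0∞) ^ 2) ^ (1 / 2 : ℝ) :=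
        chain_l2_le_sqrt_two_mul_sum_dyadic_l2 _ N J (n := fun j => ⌊(v j - 1) / h N⌋₊)
          (fun i i' hii' => Nat.floor_le_floor (by gcongr; exact hv hii'))
          (floor_div_le_two_pow (by positivity) (hvI J) _)
    _ = ENNReal.ofReal √2 * ∑ e ∈ range (N + 1), dyadicLevelVar a L (N + 1 - e) := by
        congr 1
        exact sum_congr rfl fun e he =>
          dyadicIncr_l2_eq_dyadicLevelVar a (mem_range.1 he).le
    _ ≤ _ := by gcongr; exact sum_dyadicLevelVar_le_tsum a L (N + 1)
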